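/- Let (X, T) be a topological dynamical system, d ∈ ℕ, and p₁, …, p_d : ℤ → ℤ functions such that for all non-empty open sets U₁, …, U_d, V₁, …, V_d ⊆ X the set ⋂_{i=1}^d {n ∈ ℤ : U_i ∩ T^{−p_i(n)}V_i ≠ ∅} is thickly syndetic. Let C ⊆ ℤ be syndetic and r : ℕ → ℕ any function. Then for any non-empty open sets V₁, …, V_d ⊆ X there exist integers k₀, k₁, k₂, … ∈ C with |k₀| > r(0) and |k_n| > |k_{n−1}| + r(|k_{n−1}|) for all n ≥ 1, and for each i a descending sequence V_i ⊇ V_i^{(0)} ⊇ V_i^{(1)} ⊇ ⋯ of non-empty open sets such that T^{p_i(k_j)} T^{−j} V_i^{(n)} ⊆ V_i for all 0 ≤ j ≤ n and all i. -/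

import Mathlib

def Syndetic (S : Set ℤ) : Prop :=
  ∃ L : ℕ, ∀ n : ℤ, ∃ m ∈ S, n ≤ m ∧ m ≤ n + L

def ThicklySyndetic (S : Set ℤ) : Prop :=
  ∀ L : ℕ, ∃ B : Set ℤ, Syndetic B ∧ ∀ b ∈ B, ∀ j : ℤ, 0 ≤ j → j ≤ (L : ℤ) → b + j ∈ S

def Thick (S : Set ℤ) : Prop :=
  ∀ L : ℕ, ∃ a : ℤ, ∀ j : ℤ, 0 ≤ j → j ≤ (L : ℤ) → a + j ∈ S

noncomputable def nint (a : ℝ) : ℤ := ⌊a + 1/2⌋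

noncomputable def sfrac (a : ℝ) : ℝ := a - nint a

/-!
The integers `k₀, k₁, …` and the sets `V_i^{(n)}` are built by one recursion. Given open sets
`W_i = V_i^{(n-1)}`, pull them back by `T^n`; the hypothesis makes the set of `k` for which every
pullback meets `T^{-p_i(k)} V_i` thickly syndetic, so it meets the syndetic set `C` in arbitrarily
large `k`. For such a `k`, the sets `W_i ∩ T^{-(p_i(k) - n)} V_i` are open and non-empty, and they
are the next `V_i^{(n)}`; since the sets only shrink, the inclusions of earlier steps persist.
-/

theorem ThicklySyndetic.exists_ge_mem_inter {S C : Set ℤ} (hS : ThicklySyndetic S)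
    (hC : Syndetic C) (N : ℤ) : ∃ k ≥ N, k ∈ S ∩ C := by
  obtain ⟨L, hL⟩ := hC
  obtain ⟨B, ⟨L', hB⟩, hBS⟩ := hS L
  obtain ⟨b, hbB, hNb, -⟩ := hB N
  obtain ⟨m, hmC, hbm, hmb⟩ := hL b
  refine ⟨m, hNb.trans hbm, ?_, hmC⟩
  simpa using hBS b hbB (m - b) (by omega) (by omega)

theorem exists_seq_of_forall_exists_step {α : Type*} (P : α → Prop) (R : ℕ → α → α → Prop)
    {a : α} (ha : P a) (h : ∀ n x, P x → ∃ y, P y ∧ R n x y) :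
    ∃ f : ℕ → α, f 0 = a ∧ ∀ n, P (f n) ∧ R n (f n) (f (n + 1)) := by
  choose! g hgP hgR using h
  let f : ℕ → α := fun n => Nat.rec a g n
  have hf : ∀ n, P (f n) := fun n => Nat.rec ha (fun n ih => hgP n (f n) ih) n
  exact ⟨f, rfl, fun n => ⟨hf n, hgR n (f n) (hf n)⟩⟩

namespace Homeomorph

variable {X : Type*} [TopologicalSpace X]

def toPermHom : (X ≃ₜ X) →* Equiv.Perm X where
  toFun := Homeomorph.toEquiv
  map_one' := rfl
  map_mul' _ _ := rfl

theorem toEquiv_zpow (T : X ≃ₜ X) (m : ℤ) : T.toEquiv ^ m = (T ^ m).toEquiv :=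
  (map_zpow toPermHom T m).symm

theorem continuous_toEquiv_zpow (T : X ≃ₜ X) (m : ℤ) : Continuous (T.toEquiv ^ m) := by
  rw [toEquiv_zpow]
  exact (T ^ m).continuous

end Homeomorph

section Recurrence

variable {X : Type*} [TopologicalSpace X] {d : ℕ} {T : X ≃ₜ X} {p : Fin d → ℤ → ℤ}
  {C : Set ℤ} {V : Fin d → Set X}

theorem exists_shrink_image_subset
    (hts : ∀ U : Fin d → Set X, (∀ i, IsOpen (U i)) → (∀ i, (U i).Nonempty) →
      ThicklySyndetic {n : ℤ | ∀ i, (U i ∩ (fun x => (T.toEquiv ^ (p i n)) x) ⁻¹' V i).Nonempty})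
    (hC : Syndetic C) (hVo : ∀ i, IsOpen (V i))
    (n N : ℤ) (W : Fin d → Set X) (hWo : ∀ i, IsOpen (W i)) (hWne : ∀ i, (W i).Nonempty) :
    ∃ k ∈ C, N ≤ k ∧ ∃ W' ≤ W, ((∀ i, IsOpen (W' i)) ∧ ∀ i, (W' i).Nonempty) ∧
      ∀ i, (T.toEquiv ^ (p i k - n)) '' W' i ⊆ V i := by
  let U : Fin d → Set X := fun i => ⇑(T.toEquiv ^ n) ⁻¹' W i
  have hUo : ∀ i, IsOpen (U i) := fun i => (hWo i).preimage (T.continuous_toEquiv_zpow n)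
  have hUne : ∀ i, (U i).Nonempty := fun i =>
    (hWne i).preimage (T.toEquiv ^ n).surjective
  obtain ⟨k, hNk, hkS, hkC⟩ := (hts U hUo hUne).exists_ge_mem_inter hC N
  refine ⟨k, hkC, hNk, fun i => W i ∩ ⇑(T.toEquiv ^ (p i k - n)) ⁻¹' V i,
    fun i => Set.inter_subset_left, ⟨fun i => ?_, fun i => ?_⟩, ?_⟩
  · exact (hWo i).inter ((hVo i).preimage (T.continuous_toEquiv_zpow _))
  · obtain ⟨y, hyU, hyV⟩ := hkS i
    refine ⟨(T.toEquiv ^ n) y, hyU, ?_⟩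
    simpa [← Equiv.Perm.mul_apply, ← zpow_add] using hyV
  · rintro i - ⟨x, hx, rfl⟩
    exact hx.2

end Recurrence

theorem descending_open_sets_general {X : Type*} [MetricSpace X]
    (T : X ≃ₜ X) (d : ℕ) (p : Fin d → ℤ → ℤ)
    (hts : ∀ U V : Fin d → Set X, (∀ i, IsOpen (U i)) → (∀ i, (U i).Nonempty) →
      (∀ i, IsOpen (V i)) → (∀ i, (V i).Nonempty) →
      ThicklySyndetic {n : ℤ | ∀ i, (U i ∩ (fun x => (T.toEquiv ^ (p i n)) x) ⁻¹' V i).Nonempty})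
    (C : Set ℤ) (hC : Syndetic C) (r : ℕ → ℕ)
    (V : Fin d → Set X) (hVo : ∀ i, IsOpen (V i)) (hVne : ∀ i, (V i).Nonempty) :
    ∃ k : ℕ → ℤ, (∀ n, k n ∈ C) ∧ (k 0).natAbs > r 0 ∧
      (∀ n : ℕ, 1 ≤ n → (k n).natAbs > (k (n - 1)).natAbs + r ((k (n - 1)).natAbs)) ∧
      ∃ W : Fin d → ℕ → Set X,
        (∀ i n, IsOpen (W i n) ∧ (W i n).Nonempty ∧ W i n ⊆ V i) ∧
        (∀ i n, W i (n + 1) ⊆ W i n) ∧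
        (∀ i : Fin d, ∀ n j : ℕ, j ≤ n →
          (fun x => (T.toEquiv ^ (p i (k j) - (j : ℤ))) x) '' (W i n) ⊆ V i) := by
  -- `f (n + 1) = (kₙ, V^{(n)})`; the seed `f 0 = (0, V)` makes the bound on `k₀` an instance
  -- of the recursive step.
  obtain ⟨f, hf0, hf⟩ := exists_seq_of_forall_exists_step
    (fun s : ℤ × (Fin d → Set X) => (∀ i, IsOpen (s.2 i)) ∧ ∀ i, (s.2 i).Nonempty)
    (fun n s t => t.1 ∈ C ∧ (s.1.natAbs : ℤ) + r s.1.natAbs + 1 ≤ t.1 ∧ t.2 ≤ s.2 ∧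
      ∀ i, (T.toEquiv ^ (p i t.1 - n)) '' t.2 i ⊆ V i)
    (a := (0, V)) ⟨hVo, hVne⟩ (fun n s ⟨hso, hsne⟩ => by
      obtain ⟨k, hkC, hk, W', hW', hW'good, hW'V⟩ :=
        exists_shrink_image_subset (fun U hUo hUne => hts U V hUo hUne hVo hVne) hC hVo
          n _ s.2 hso hsne
      exact ⟨(k, W'), hW'good, hkC, hk, hW', hW'V⟩)
  have hanti : Antitone fun n => (f n).2 := antitone_nat_of_succ_le fun n => (hf n).2.2.2.1
  refine ⟨fun n => (f (n + 1)).1, fun n => (hf n).2.1, ?_, ?_,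
    fun i n => (f (n + 1)).2 i, fun i n => ⟨(hf (n + 1)).1.1 i, (hf (n + 1)).1.2 i, ?_⟩,
    fun i n => (hf (n + 1)).2.2.2.1 i, fun i n j hjn => ?_⟩
  · have := (hf 0).2.2.1
    simp only [hf0, Int.natAbs_zero] at this
    show r 0 < (f (0 + 1)).1.natAbs
    omega
  · rintro (_ | n) hn
    · omega
    · have := (hf (n + 1)).2.2.1
      simp only [Nat.add_sub_cancel]
      omega
  · simpa [hf0] using hanti (Nat.zero_le (n + 1)) i
  · exact (Set.image_mono (hanti (by omega : j + 1 ≤ n + 1) i)).trans ((hf j).2.2.2.2 i)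

theorem descending_open_sets {X : Type*} [MetricSpace X] [CompactSpace X]
    (T : X ≃ₜ X) (d : ℕ) (p : Fin d → ℤ → ℤ)
    (hts : ∀ U V : Fin d → Set X, (∀ i, IsOpen (U i)) → (∀ i, (U i).Nonempty) →
      (∀ i, IsOpen (V i)) → (∀ i, (V i).Nonempty) →
      ThicklySyndetic {n : ℤ | ∀ i, (U i ∩ (fun x => (T.toEquiv ^ (p i n)) x) ⁻¹' V i).Nonempty})
    (C : Set ℤ) (hC : Syndetic C) (r : ℕ → ℕ)
    (V : Fin d → Set X) (hVo : ∀ i, IsOpen (V i)) (hVne : ∀ i, (V i).Nonempty) :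
    ∃ k : ℕ → ℤ, (∀ n, k n ∈ C) ∧ (k 0).natAbs > r 0 ∧
      (∀ n : ℕ, 1 ≤ n → (k n).natAbs > (k (n - 1)).natAbs + r ((k (n - 1)).natAbs)) ∧
      ∃ W : Fin d → ℕ → Set X,
        (∀ i n, IsOpen (W i n) ∧ (W i n).Nonempty ∧ W i n ⊆ V i) ∧
        (∀ i n, W i (n + 1) ⊆ W i n) ∧
        (∀ i : Fin d, ∀ n j : ℕ, j ≤ n →
          (fun x => (T.toEquiv ^ (p i (k j) - (j : ℤ))) x) '' (W i n) ⊆ V i) :=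
  descending_open_sets_general T d p hts C hC r V hVo hVne
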